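/- Three times the number of three-element tope committees 𝒦 for 𝒯 with 𝒦 ⊆ max⁺(𝒯) equals the sum, over all 2-element subsets {T₁, T₂} of max⁺(𝒯) with T₁⁻ ∩ T₂⁻ = ∅, of the number of T₃ ∈ max⁺(𝒯) whose positive part contains T₁⁻ ∪ T₂⁻: 3 · #{𝒦 ∈ K*₃(𝒯) : 𝒦 ⊆ max⁺(𝒯)} = Σ_{{T₁,T₂} ⊆ max⁺(𝒯), T₁⁻ ∩ T₂⁻ = ∅} #{T₃ ∈ max⁺(𝒯) : T₃⁺ ⊇ T₁⁻ ∪ T₂⁻}. (This is the lattice-free form of the paper's Proposition, where coatoms of the augmented lattice of convex sets containing D₁ ∨ D₂ correspond to members of max⁺(𝒯) whose positive part contains T₁⁻ ∪ T₂⁻.) -/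

import Mathlib

/-- The negation `−T` of a sign vector `T : E → Bool` (`true` = `+`, `false` = `−`). -/
def sgnNeg {E : Type*} (T : E → Bool) : E → Bool := fun e => !T e

/-- The positive part `T⁺` of a sign vector. -/
def positivePart {E : Type*} [Fintype E] [DecidableEq E] (T : E → Bool) : Finset E :=
  Finset.univ.filter fun e => T e = true

/-- The negative part `T⁻` of a sign vector. -/
def negativePart {E : Type*} [Fintype E] [DecidableEq E] (T : E → Bool) : Finset E :=
  Finset.univ.filter fun e => T e = false

/-- `𝒦` is a tope committee for `𝒯`: `𝒦 ⊆ 𝒯`, and for every `e ∈ E` the number of members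
of `𝒦` positive on `e` exceeds the number of members negative on `e`. -/
def IsCommittee {E : Type*} [Fintype E] [DecidableEq E]
    (𝒯 𝒦 : Finset (E → Bool)) : Prop :=
  𝒦 ⊆ 𝒯 ∧ ∀ e : E,
    (𝒦.filter fun K => K e = true).card > (𝒦.filter fun K => K e = false).card

/-- `𝒜` is a tope anti-committee for `𝒯`: `𝒜 ⊆ 𝒯` and `−𝒜` is a tope committee for `𝒯`. -/
def IsAntiCommittee {E : Type*} [Fintype E] [DecidableEq E]
    (𝒯 𝒜 : Finset (E → Bool)) : Prop :=
  𝒜 ⊆ 𝒯 ∧ IsCommittee 𝒯 (𝒜.image sgnNeg)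

/-- `max⁺(𝒯)`: the members of `𝒯` whose positive part is inclusion-maximal in
the family of positive parts of members of `𝒯`. -/
def maxPos {E : Type*} [Fintype E] [DecidableEq E] (𝒯 : Finset (E → Bool)) :
    Finset (E → Bool) :=
  𝒯.filter fun T => ∀ S ∈ 𝒯, positivePart T ⊆ positivePart S → positivePart T = positivePart S

/-!
The members of a three-element committee are pairwise "negatively disjoint": a coordinate negative
on two of them would be outvoted. So the committees inside `max⁺(𝒯)` are the triangles of the graph
on `max⁺(𝒯)` joining `T₁, T₂` when `T₁⁻ ∩ T₂⁻ = ∅`, and `T₁⁻ ⊆ T₃⁺` says `T₁` and `T₃` are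
adjacent. The identity is then the double count of pairs (triangle, vertex of it): deleting the
vertex leaves an edge, and the vertices completing an edge to a triangle are its common
neighbours. No tope is adjacent to itself, since `T⁻ = ∅` would make `T` the all-plus vector.
-/

open Finset

section CliqueCounting

variable {α : Type*} [DecidableEq α] {r : α → α → Prop} [DecidableRel r] [Std.Symm r]

open Classical in
theorem succ_mul_card_pairwise_eq_sum_card_commonNeighbors {s : Finset α}
    (hirr : ∀ a ∈ s, ¬ r a a) (k : ℕ) :
    (k + 1) * #((s.powersetCard (k + 1)).filter fun K : Finset α => (K : Set α).Pairwise r) =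
      ∑ P ∈ (s.powersetCard k).filter (fun P : Finset α => (P : Set α).Pairwise r),
        #{c ∈ s | ∀ a ∈ P, r a c} := by
  set B := (s.powersetCard (k + 1)).filter fun K : Finset α => (K : Set α).Pairwise r
  set A := (s.powersetCard k).filter fun P : Finset α => (P : Set α).Pairwise r
  have hB : (k + 1) * #B = #(B.sigma fun K => K) := by
    rw [card_sigma, sum_congr rfl fun K hK => (mem_powersetCard.1 (mem_filter.1 hK).1).2,
      sum_const, smul_eq_mul, mul_comm]
  have notMem_of_forall {P : Finset α} {c : α} (hc : c ∈ s) (hPc : ∀ a ∈ P, r a c) : c ∉ P :=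
    fun hcP => hirr c hc (hPc c hcP)
  rw [hB, ← card_sigma]
  refine card_nbij' (fun x => ⟨x.1.erase x.2, x.2⟩) (fun y => ⟨insert y.2 y.1, y.2⟩)
    ?_ ?_ (fun x hx => ?_) (fun y hy => ?_)
  · rintro ⟨K, c⟩ hx
    simp only [coe_sigma, Set.mem_sigma_iff, mem_coe, B, mem_filter, mem_powersetCard] at hx
    obtain ⟨⟨⟨hKs, hKcard⟩, hK⟩, hcK⟩ := hx
    simp only [coe_sigma, Set.mem_sigma_iff, mem_coe, A, mem_filter, mem_powersetCard]
    refine ⟨⟨⟨(erase_subset c K).trans hKs, by rw [card_erase_of_mem hcK, hKcard]; rfl⟩,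
      hK.mono (by simp)⟩, hKs hcK, fun a ha => ?_⟩
    exact hK (mem_of_mem_erase ha) hcK (ne_of_mem_erase ha)
  · rintro ⟨P, c⟩ hy
    simp only [coe_sigma, Set.mem_sigma_iff, mem_coe, A, mem_filter, mem_powersetCard] at hy
    obtain ⟨⟨⟨hPs, hPcard⟩, hP⟩, hcs, hPc⟩ := hy
    simp only [coe_sigma, Set.mem_sigma_iff, mem_coe, B, mem_filter, mem_powersetCard]
    refine ⟨⟨⟨insert_subset hcs hPs, by rw [card_insert_of_notMem (notMem_of_forall hcs hPc),
      hPcard]⟩, ?_⟩, mem_insert_self c P⟩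
    rw [coe_insert, Set.pairwise_insert_of_symm]
    exact ⟨hP, fun b hb _ => Std.Symm.symm _ _ (hPc b hb)⟩
  · simp [insert_erase (mem_sigma.1 hx).2]
  · obtain ⟨-, hc⟩ := mem_sigma.1 hy
    simp only [mem_filter] at hc
    simp [erase_insert (notMem_of_forall hc.1 hc.2)]

end CliqueCounting

section SignVectors

variable {E : Type*} [Fintype E] [DecidableEq E]

theorem mem_positivePart {T : E → Bool} {e : E} : e ∈ positivePart T ↔ T e = true := by
  simp [positivePart]

theorem mem_negativePart {T : E → Bool} {e : E} : e ∈ negativePart T ↔ T e = false := by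
  simp [negativePart]

theorem compl_negativePart (T : E → Bool) : (negativePart T)ᶜ = positivePart T := by
  ext e
  simp [mem_positivePart, mem_negativePart]

theorem negativePart_subset_positivePart_iff {S T : E → Bool} :
    negativePart S ⊆ positivePart T ↔ Disjoint (negativePart S) (negativePart T) := by
  rw [← compl_negativePart, subset_compl_iff_disjoint_right]

theorem negativePart_eq_empty_iff {T : E → Bool} : negativePart T = ∅ ↔ T = fun _ => true := by
  simp [eq_empty_iff_forall_notMem, mem_negativePart, funext_iff]

theorem not_disjoint_negativePart_self {T : E → Bool} (hT : T ≠ fun _ => true) :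
    ¬ Disjoint (negativePart T) (negativePart T) := by
  rwa [disjoint_self, bot_eq_empty, negativePart_eq_empty_iff]

theorem pairwiseDisjoint_negativePart_iff {𝒦 : Finset (E → Bool)} :
    (𝒦 : Set (E → Bool)).PairwiseDisjoint negativePart ↔
      ∀ e, #{K ∈ 𝒦 | K e = false} ≤ 1 := by
  simp only [card_le_one, mem_filter]
  constructor
  · intro h e K₁ hK₁ K₂ hK₂
    by_contra hne
    exact disjoint_left.1 (h hK₁.1 hK₂.1 hne) (mem_negativePart.2 hK₁.2) (mem_negativePart.2 hK₂.2)
  · intro h K₁ hK₁ K₂ hK₂ hne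
    refine disjoint_left.2 fun e he₁ he₂ => hne ?_
    exact h e K₁ ⟨hK₁, mem_negativePart.1 he₁⟩ K₂ ⟨hK₂, mem_negativePart.1 he₂⟩

theorem isCommittee_iff_pairwiseDisjoint_of_card_eq_three {𝒯 𝒦 : Finset (E → Bool)}
    (h𝒦 : #𝒦 = 3) :
    IsCommittee 𝒯 𝒦 ↔ 𝒦 ⊆ 𝒯 ∧ (𝒦 : Set (E → Bool)).PairwiseDisjoint negativePart := by
  rw [IsCommittee, pairwiseDisjoint_negativePart_iff]
  refine and_congr_right fun _ => forall_congr' fun e => ?_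
  have := card_filter_add_card_filter_not (s := 𝒦) (fun K => K e = true)
  simp only [Bool.not_eq_true] at this
  omega

open Classical in
theorem setOf_isCommittee_card_eq_three_subset {𝒯 𝒮 : Finset (E → Bool)} (h𝒮 : 𝒮 ⊆ 𝒯) :
    {𝒦 | IsCommittee 𝒯 𝒦 ∧ #𝒦 = 3 ∧ 𝒦 ⊆ 𝒮} =
      ↑((𝒮.powersetCard 3).filter fun 𝒦 : Finset (E → Bool) =>
        (𝒦 : Set (E → Bool)).PairwiseDisjoint negativePart) := by
  ext 𝒦
  simp only [Set.mem_ofPred_eq, coe_filter, mem_powersetCard]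
  constructor
  · rintro ⟨h𝒦, hcard, hsub⟩
    exact ⟨⟨hsub, hcard⟩, ((isCommittee_iff_pairwiseDisjoint_of_card_eq_three hcard).1 h𝒦).2⟩
  · rintro ⟨⟨hsub, hcard⟩, hdisj⟩
    exact ⟨(isCommittee_iff_pairwiseDisjoint_of_card_eq_three hcard).2 ⟨hsub.trans h𝒮, hdisj⟩,
      hcard, hsub⟩

end SignVectors

theorem three_mul_card_three_committees_in_maxPos_general
    {E : Type*} [Fintype E] [DecidableEq E]
    (𝒯 : Finset (E → Bool))
    (hplus : (fun _ : E => true) ∉ 𝒯) :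
    3 * {𝒦 : Finset (E → Bool) | IsCommittee 𝒯 𝒦 ∧ 𝒦.card = 3 ∧ 𝒦 ⊆ maxPos 𝒯}.ncard =
      ∑ P ∈ (Finset.powersetCard 2 (maxPos 𝒯)).filter
          (fun P => ∀ T₁ ∈ P, ∀ T₂ ∈ P, T₁ ≠ T₂ → negativePart T₁ ∩ negativePart T₂ = ∅),
        ((maxPos 𝒯).filter fun T₃ => ∀ T ∈ P, negativePart T ⊆ positivePart T₃).card := by
  classical
  have hmax : maxPos 𝒯 ⊆ 𝒯 := filter_subset _ _
  have hirr (T) (hT : T ∈ maxPos 𝒯) : ¬ Disjoint (negativePart T) (negativePart T) :=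
    not_disjoint_negativePart_self fun h => hplus (h ▸ hmax hT)
  have : Std.Symm fun S T : E → Bool => Disjoint (negativePart S) (negativePart T) :=
    ⟨fun _ _ h => h.symm⟩
  rw [setOf_isCommittee_card_eq_three_subset hmax, Set.ncard_coe_finset]
  convert succ_mul_card_pairwise_eq_sum_card_commonNeighbors
    (r := fun S T => Disjoint (negativePart S) (negativePart T)) hirr 2 using 3
  · exact filter_congr fun _ _ => Iff.rfl
  · simp only [Set.Pairwise, mem_coe, disjoint_iff_inter_eq_empty]
  · ext T
    simp only [mem_filter, negativePart_subset_positivePart_iff]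

/-- `3 · #{𝒦 ∈ K*₃(𝒯) : 𝒦 ⊆ max⁺(𝒯)}` equals the sum, over all 2-element
subsets `{T₁, T₂}` of `max⁺(𝒯)` with `T₁⁻ ∩ T₂⁻ = ∅`, of
`#{T₃ ∈ max⁺(𝒯) : T₃⁺ ⊇ T₁⁻ ∪ T₂⁻}`. -/
theorem three_mul_card_three_committees_in_maxPos
    {E : Type*} [Fintype E] [DecidableEq E] [Nonempty E]
    (𝒯 : Finset (E → Bool)) (h𝒯 : 𝒯.Nonempty)
    (hsym : 𝒯.image sgnNeg = 𝒯)
    (hplus : (fun _ : E => true) ∉ 𝒯) :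
    3 * {𝒦 : Finset (E → Bool) | IsCommittee 𝒯 𝒦 ∧ 𝒦.card = 3 ∧ 𝒦 ⊆ maxPos 𝒯}.ncard =
      ∑ P ∈ (Finset.powersetCard 2 (maxPos 𝒯)).filter
          (fun P => ∀ T₁ ∈ P, ∀ T₂ ∈ P, T₁ ≠ T₂ → negativePart T₁ ∩ negativePart T₂ = ∅),
        ((maxPos 𝒯).filter fun T₃ => ∀ T ∈ P, negativePart T ⊆ positivePart T₃).card :=
  three_mul_card_three_committees_in_maxPos_general 𝒯 hplus
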